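/- Let G be a hyperbolic group (i.e., finitely generated with δ-hyperbolic Cayley graph) and let H ≤ G be a subgroup such that the inclusion of a Cayley graph of H into a Cayley graph of G (with respect to finite generating sets, H's generating set contained in G's) admits an injective Cannon-Thurston map in the strong sense, where H is assumed finitely generated and hyperbolic. Then H is quasiconvex in G. -/

import Mathlib

/-!
If the ambient Gromov products `gpd_G(1; u, v)` of pairs `u, v ∈ H` with `gpd_H(1; u, v) = 0` are
bounded by `C`, then `H` is quasiconvex: by the four-point condition every path from `a` to `b`, in
particular the image of an `H`-geodesic, passes within `2 gpd_G(z; a, b) + 2δ` of each point `x`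
of a `G`-geodesic `[a, b]`, at its vertex `z` with `d(a, z) = d(a, x)`; translating `z` to `1`
turns `gpd_G(z; a, b)` into such a bounded Gromov product.

If the bound failed, pairs `u_n, v_n` with `gpd_H(1; u_n, v_n) = 0` and `gpd_G(1; u_n, v_n) → ∞`
would go to infinity in `H`; since balls of `H` are finite, they have Gromov subsequences. The
Cannon–Thurston map makes the images Gromov sequences in `G`, which are then equivalent since
their diagonal Gromov products diverge; injectivity makes `u, v` equivalent in `H`, contradicting
`gpd_H(1; u_n, v_n) = 0`.
-/

open Filter

/-- A graph is fine if for each edge `{a, b}` and each `n`, only finitely many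
circuits (embedded cycles) of length at most `n` contain that edge. -/
def Fine {V : Type*} (G : SimpleGraph V) : Prop :=
  ∀ ⦃a b : V⦄, G.Adj a b → ∀ n : ℕ,
    {w : G.Walk a a | w.IsCycle ∧ w.length ≤ n ∧ s(a, b) ∈ w.edges}.Finite

/-- The Gromov product in a graph, with respect to the path metric. -/
noncomputable def gpd {V : Type*} (X : SimpleGraph V) (p a b : V) : ℝ :=
  ((X.dist p a : ℝ) + (X.dist p b : ℝ) - (X.dist a b : ℝ)) / 2

/-- A graph is δ-hyperbolic (four-point inequality for its path metric). -/
def GraphHyp {V : Type*} (X : SimpleGraph V) (δ : ℝ) : Prop :=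
  ∀ p a b c : V, min (gpd X p a b) (gpd X p b c) - δ ≤ gpd X p a c

/-- The Cayley graph of `G` with respect to `S`. -/
def Cay (G : Type*) [Group G] (S : Finset G) : SimpleGraph G where
  Adj x y := x ≠ y ∧ (x⁻¹ * y ∈ S ∨ y⁻¹ * x ∈ S)
  symm := ⟨fun _ _ h => ⟨h.1.symm, h.2.symm⟩⟩
  loopless := ⟨fun _ h => h.1 rfl⟩

/-- `G` is a hyperbolic group: it has a finite generating set whose Cayley
graph is Gromov hyperbolic. -/
def IsHyperbolicGroup (G : Type*) [Group G] : Prop :=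
  ∃ S : Finset G, Subgroup.closure (S : Set G) = ⊤ ∧ ∃ δ : ℝ, GraphHyp (Cay G S) δ

/-- `H` is quasiconvex in `G`: for any finite generating set, geodesics of the
Cayley graph between elements of `H` stay uniformly close to `H`. -/
def QuasiconvexIn {G : Type*} [Group G] (H : Subgroup G) : Prop :=
  ∀ S : Finset G, Subgroup.closure (S : Set G) = ⊤ →
    ∃ K : ℝ, ∀ a b : G, a ∈ H → b ∈ H →
      ∀ w : (Cay G S).Walk a b, w.length = (Cay G S).dist a b →
        ∀ v ∈ w.support, ∃ h ∈ H, ((Cay G S).dist v h : ℝ) ≤ K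

/-- The Cayley graph of a subgroup `H`, with respect to a set `T` of elements
of the ambient group generating `H`. -/
def CaySub {G : Type*} [Group G] (H : Subgroup G) (T : Finset G) :
    SimpleGraph H where
  Adj x y := x ≠ y ∧ (((x : G)⁻¹ * y ∈ T) ∨ ((y : G)⁻¹ * x ∈ T))
  symm := ⟨fun _ _ h => ⟨h.1.symm, h.2.symm⟩⟩
  loopless := ⟨fun _ h => h.1 rfl⟩

/-- Cannon–Thurston map in the strong sense, for maps between graphs with their
path metrics. -/
def StrongCTGraph {VH VG : Type*} (Y : SimpleGraph VH) (X : SimpleGraph VG)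
    (f : VH → VG) (y₀ : VH) (M : ℕ → ℝ) : Prop :=
  Tendsto M atTop atTop ∧
  ∀ (N : ℕ) (a b : VH) (w : Y.Walk a b), w.length = Y.dist a b →
    (∀ y ∈ w.support, (N : ℝ) < (Y.dist y₀ y : ℝ)) →
    ∀ w' : X.Walk (f a) (f b), w'.length = X.dist (f a) (f b) →
      ∀ x ∈ w'.support, M N < (X.dist (f y₀) x : ℝ)

/-- A Gromov sequence in a graph. -/
def GSeqG {V : Type*} (X : SimpleGraph V) (p : V) (u : ℕ → V) : Prop :=
  Tendsto (fun q : ℕ × ℕ => gpd X p (u q.1) (u q.2)) atTop atTop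

/-- Equivalence of Gromov sequences in a graph. -/
def GEquivG {V : Type*} (X : SimpleGraph V) (p : V) (u v : ℕ → V) : Prop :=
  Tendsto (fun q : ℕ × ℕ => gpd X p (u q.1) (v q.2)) atTop atTop

namespace SimpleGraph

variable {V V' : Type*} {X : SimpleGraph V} {X' : SimpleGraph V'} {a b u v x : V}

theorem Hom.dist_le (f : X →g X') (h : X.Reachable u v) : X'.dist (f u) (f v) ≤ X.dist u v := by
  obtain ⟨w, hw⟩ := h.exists_walk_length_eq_dist
  simpa [hw] using X'.dist_le (w.map f)

theorem Iso.dist_map (e : X ≃g X') (u v : V) : X'.dist (e u) (e v) = X.dist u v := by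
  by_cases h : X.Reachable u v
  · refine le_antisymm (e.toHom.dist_le h) ?_
    simpa using e.symm.toHom.dist_le (Iso.reachable_iff.2 h : X'.Reachable (e u) (e v))
  · rw [dist_eq_zero_of_not_reachable h, dist_eq_zero_of_not_reachable (mt Iso.reachable_iff.1 h)]

theorem Connected.cast_dist_triangle (hc : X.Connected) (u v w : V) :
    (X.dist u w : ℝ) ≤ X.dist u v + X.dist v w := by
  exact_mod_cast hc.dist_triangle

theorem Walk.dist_add_dist_of_mem_support {w : X.Walk a b} (hw : w.length = X.dist a b)
    (hx : x ∈ w.support) : X.dist a x + X.dist x b = X.dist a b := by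
  obtain ⟨q, r, rfl⟩ := Walk.mem_support_iff_exists_append.mp hx
  have := X.dist_le q
  have := X.dist_le r
  have := q.reachable.dist_triangle_left b
  rw [Walk.length_append] at hw
  omega

theorem Walk.exists_mem_support_dist_eq (γ : X.Walk u b) {t : ℕ} (hu : X.dist a u ≤ t)
    (hb : t ≤ X.dist a b) : ∃ z ∈ γ.support, X.dist a z = t := by
  induction γ with
  | nil => exact ⟨_, Walk.start_mem_support _, le_antisymm hu hb⟩
  | cons h q ih =>
    rcases hu.eq_or_lt with hu | hu
    · exact ⟨_, Walk.start_mem_support _, hu⟩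
    · have := h.diff_dist_adj (u := a)
      obtain ⟨z, hz, hzt⟩ := ih (by omega) hb
      exact ⟨z, by simp [hz], hzt⟩

theorem Connected.finite_setOf_dist_le (hc : X.Connected) (hX : ∀ v, (X.neighborSet v).Finite)
    (p : V) (n : ℕ) : {v | X.dist p v ≤ n}.Finite := by
  induction n with
  | zero => simp [hc.dist_eq_zero_iff]
  | succ n ih =>
    refine (ih.union (ih.biUnion fun u _ => hX u)).subset fun v hv => ?_
    obtain ⟨w, hw⟩ := (hc.preconnected v p).exists_walk_length_eq_dist
    cases w with
    | nil => simp
    | cons h q =>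
      right
      have := X.dist_le q
      rw [Set.mem_ofPred_eq, dist_comm, ← hw, Walk.length_cons] at hv
      simp only [Set.mem_iUnion, Set.mem_ofPred_eq, mem_neighborSet]
      exact ⟨_, by rw [dist_comm]; omega, h.symm⟩

end SimpleGraph

section Gromov

open SimpleGraph

variable {V : Type*} {X : SimpleGraph V} {a b p y : V}

theorem gpd_comm : gpd X p a b = gpd X p b a := by
  simp only [gpd, dist_comm (u := a)]
  ring

theorem gpd_nonneg (hc : X.Connected) : 0 ≤ gpd X p a b := by
  have := hc.cast_dist_triangle a p b
  simp only [gpd, dist_comm (u := a) (v := p)] at *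
  linarith

theorem gpd_le_dist_left (hc : X.Connected) : gpd X p a b ≤ X.dist p a := by
  have := hc.cast_dist_triangle p a b
  simp only [gpd]
  linarith

theorem gpd_le_dist_right (hc : X.Connected) : gpd X p a b ≤ X.dist p b :=
  gpd_comm (X := X) ▸ gpd_le_dist_left hc

theorem gpd_map_iso {V' : Type*} {X' : SimpleGraph V'} (e : X ≃g X') (p a b : V) :
    gpd X' (e p) (e a) (e b) = gpd X p a b := by
  simp only [gpd, Iso.dist_map]

theorem gpd_eq_zero_of_dist_add_dist (h : X.dist a p + X.dist p b = X.dist a b) :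
    gpd X p a b = 0 := by
  have : (X.dist p a : ℝ) + X.dist p b = X.dist a b := by
    rw [dist_comm]; exact_mod_cast h
  simp only [gpd]
  linarith

theorem gpd_le_dist_of_dist_add_dist (hc : X.Connected)
    (h : X.dist a y + X.dist y b = X.dist a b) : gpd X p a b ≤ X.dist p y := by
  have h' : (X.dist a y : ℝ) + X.dist y b = X.dist a b := by exact_mod_cast h
  have := hc.cast_dist_triangle p y a
  have := hc.cast_dist_triangle p y b
  simp only [gpd, dist_comm (u := y) (v := a)] at *
  linarith

theorem dist_le_gpd_of_dist_add_dist (hc : X.Connected)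
    (ha : X.dist p y + X.dist y a = X.dist p a) (hb : X.dist p y + X.dist y b = X.dist p b) :
    (X.dist p y : ℝ) ≤ gpd X p a b := by
  have ha' : (X.dist p y : ℝ) + X.dist y a = X.dist p a := by exact_mod_cast ha
  have hb' : (X.dist p y : ℝ) + X.dist y b = X.dist p b := by exact_mod_cast hb
  have := hc.cast_dist_triangle a y b
  simp only [gpd, dist_comm (u := a) (v := y)] at *
  linarith

theorem GSeqG.comp_strictMono {u : ℕ → V} (hu : GSeqG X p u) {φ : ℕ → ℕ}
    (hφ : StrictMono φ) : GSeqG X p (fun n => u (φ n)) := by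
  have hφφ : Tendsto (Prod.map φ φ) atTop atTop := by
    rw [← prod_atTop_atTop_eq]
    exact hφ.tendsto_atTop.prodMap hφ.tendsto_atTop
  exact Tendsto.comp (f := Prod.map φ φ) hu hφφ

theorem GEquivG.tendsto_diag {u v : ℕ → V} (h : GEquivG X p u v) :
    Tendsto (fun n => gpd X p (u n) (v n)) atTop atTop :=
  Tendsto.comp (f := fun n => (n, n)) h tendsto_atTop_diagonal

end Gromov

namespace GraphHyp

open SimpleGraph

variable {V : Type*} {X : SimpleGraph V} {a b p x z : V} {δ : ℝ}

theorem exists_mem_geodesic_dist_le_gpd (hδ : GraphHyp X δ) (hc : X.Connected)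
    {w : X.Walk a b} (hw : w.length = X.dist a b) (p : V) :
    ∃ y ∈ w.support, (X.dist p y : ℝ) ≤ gpd X p a b + 2 * δ + 1 := by
  -- At the vertex `y` with `d(a, y) = ⌊gpd_a(p, b)⌋` both cases of the four-point condition
  -- at `y`, where `gpd_y(a, b) = 0`, give the bound.
  set k := ⌊gpd X a p b⌋₊
  have hk : k ≤ X.dist a b := Nat.floor_le_of_le (gpd_le_dist_right hc)
  obtain ⟨y, hy, hay⟩ := w.exists_mem_support_dist_eq (by simp) hk
  have hyb : (X.dist a y : ℝ) + X.dist y b = X.dist a b := by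
    exact_mod_cast w.dist_add_dist_of_mem_support hw hy
  have hk0 : (k : ℝ) ≤ gpd X a p b := Nat.floor_le (gpd_nonneg hc)
  have hk1 : gpd X a p b < k + 1 := Nat.lt_floor_add_one _
  have h4 := hδ y a p b
  rw [gpd_eq_zero_of_dist_add_dist (w.dist_add_dist_of_mem_support hw hy)] at h4
  refine ⟨y, hy, ?_⟩
  rw [← hay] at hk0 hk1
  simp only [gpd, dist_comm (u := y), dist_comm (v := a)] at *
  rcases min_le_iff.1 (show min _ _ ≤ δ by linarith) with h | h <;> linarith

theorem dist_le_two_mul_gpd_of_dist_eq (hδ : GraphHyp X δ) (hc : X.Connected)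
    (hx : X.dist a x + X.dist x b = X.dist a b) (hz : X.dist a z = X.dist a x) :
    (X.dist x z : ℝ) ≤ 2 * gpd X z a b + 2 * δ := by
  have hx' : (X.dist a x : ℝ) + X.dist x b = X.dist a b := by exact_mod_cast hx
  have hz' : (X.dist a z : ℝ) = X.dist a x := by exact_mod_cast hz
  have h0 : 0 ≤ gpd X z a b := gpd_nonneg hc
  have h4 := hδ a x b z
  simp only [gpd, dist_comm (u := z) (v := a), dist_comm (u := z) (v := b)] at *
  rw [min_def] at h4
  split_ifs at h4 <;> linarith

theorem exists_mem_walk_dist_le_gpd (hδ : GraphHyp X δ) (hc : X.Connected) (γ : X.Walk a b)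
    (hx : X.dist a x + X.dist x b = X.dist a b) :
    ∃ z ∈ γ.support, (X.dist x z : ℝ) ≤ 2 * gpd X z a b + 2 * δ := by
  obtain ⟨z, hz, hza⟩ :=
    γ.exists_mem_support_dist_eq (a := a) (t := X.dist a x) (by simp) (by omega)
  exact ⟨z, hz, hδ.dist_le_two_mul_gpd_of_dist_eq hc hx hza⟩

theorem gEquivG {u v : ℕ → V} (hδ : GraphHyp X δ) (hu : GSeqG X p u)
    (huv : Tendsto (fun n => gpd X p (u n) (v n)) atTop atTop) : GEquivG X p u v := by
  have huv' : Tendsto (fun q : ℕ × ℕ => gpd X p (u q.2) (v q.2)) atTop atTop :=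
    Tendsto.comp (f := Prod.snd) huv (prod_atTop_atTop_eq (α := ℕ) (β := ℕ) ▸ tendsto_snd)
  refine tendsto_atTop.2 fun C => ?_
  filter_upwards [hu.eventually_ge_atTop (C + δ), huv'.eventually_ge_atTop (C + δ)] with q h1 h2
  have := hδ p (u q.1) (u q.2) (v q.2)
  have := le_min h1 h2
  linarith

end GraphHyp

section Extraction

open SimpleGraph

variable {V : Type*} {X : SimpleGraph V} {p : V}

theorem exists_strictMono_gSeqG (hc : X.Connected)
    (hball : ∀ n : ℕ, {v | X.dist p v ≤ n}.Finite) {y : ℕ → V}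
    (hy : Tendsto (fun n => X.dist p (y n)) atTop atTop) :
    ∃ φ : ℕ → ℕ, StrictMono φ ∧ GSeqG X p (fun n => y (φ n)) := by
  -- Since balls are finite, for each `L` the geodesics `[p, y i]` for `𝒰`-almost all `i` pass
  -- through a common vertex `v L` at distance `L` from `p`; then `gpd_p(y i, y j) ≥ L`.
  let 𝒰 : Ultrafilter ℕ := hyperfilter ℕ
  have hL : ∀ L : ℕ, ∃ v, ∀ᶠ i in (𝒰 : Filter ℕ),
      X.dist p v = L ∧ X.dist p v + X.dist v (y i) = X.dist p (y i) := by
    intro L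
    suffices ∀ᶠ i in (𝒰 : Filter ℕ), ∃ v ∈ {v | X.dist p v ≤ L},
        X.dist p v = L ∧ X.dist p v + X.dist v (y i) = X.dist p (y i) by
      obtain ⟨v, -, hv⟩ := (Ultrafilter.eventually_exists_mem_iff (hball L)).1 this
      exact ⟨v, hv⟩
    filter_upwards [Nat.hyperfilter_le_atTop (hy.eventually_ge_atTop L)] with i hi
    obtain ⟨w, hw⟩ := (hc.preconnected p (y i)).exists_walk_length_eq_dist
    obtain ⟨v, hv, hpv⟩ := w.exists_mem_support_dist_eq (a := p) (by simp) hi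
    exact ⟨v, hpv.le, hpv, w.dist_add_dist_of_mem_support hw hv⟩
  choose v hv using hL
  have hφ : ∀ n, ∃ᶠ i in atTop, ∀ L ∈ Finset.range (n + 1),
      X.dist p (v L) = L ∧ X.dist p (v L) + X.dist (v L) (y i) = X.dist p (y i) :=
    fun n => ((eventually_all_finset _).2 fun L _ => hv L).frequently.filter_mono
      Nat.hyperfilter_le_atTop
  obtain ⟨φ, hφ_mono, hφ⟩ := extraction_forall_of_frequently hφ
  refine ⟨φ, hφ_mono, tendsto_atTop.2 fun C => ?_⟩
  obtain ⟨L, hL⟩ := exists_nat_ge C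
  filter_upwards [eventually_ge_atTop (L, L)] with q hq
  obtain ⟨hi, hj⟩ := Prod.mk_le_mk.1 hq
  obtain ⟨hpv, hvi⟩ := hφ q.1 L (Finset.mem_range_succ_iff.2 hi)
  obtain ⟨-, hvj⟩ := hφ q.2 L (Finset.mem_range_succ_iff.2 hj)
  have := dist_le_gpd_of_dist_add_dist hc hvi hvj
  rw [hpv] at this
  linarith

end Extraction

namespace StrongCTGraph

open SimpleGraph

variable {VH VG : Type*} {Y : SimpleGraph VH} {X : SimpleGraph VG} {f : VH → VG} {y₀ : VH}
  {M : ℕ → ℝ} {δ : ℝ}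

theorem sub_le_gpd (hCT : StrongCTGraph Y X f y₀ M) (hY : Y.Connected) (hX : X.Connected)
    (hδ : GraphHyp X δ) {N : ℕ} {a b : VH} (hab : N < gpd Y y₀ a b) :
    M N - (2 * δ + 1) ≤ gpd X (f y₀) (f a) (f b) := by
  obtain ⟨ω, hω⟩ := (hY.preconnected a b).exists_walk_length_eq_dist
  obtain ⟨γ, hγ⟩ := (hX.preconnected (f a) (f b)).exists_walk_length_eq_dist
  have hfar : ∀ y ∈ ω.support, (N : ℝ) < Y.dist y₀ y := fun y hy =>
    hab.trans_le (gpd_le_dist_of_dist_add_dist hY (ω.dist_add_dist_of_mem_support hω hy))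
  obtain ⟨x, hx, hxd⟩ := hδ.exists_mem_geodesic_dist_le_gpd hX hγ (f y₀)
  have := hCT.2 N a b ω hω hfar γ hγ x hx
  linarith

theorem gSeqG_comp (hCT : StrongCTGraph Y X f y₀ M) (hY : Y.Connected) (hX : X.Connected)
    (hδ : GraphHyp X δ) {u : ℕ → VH} (hu : GSeqG Y y₀ u) :
    GSeqG X (f y₀) (fun n => f (u n)) := by
  refine tendsto_atTop.2 fun C => ?_
  obtain ⟨N, hN⟩ := (hCT.1.eventually_ge_atTop (C + (2 * δ + 1))).exists
  filter_upwards [hu.eventually_gt_atTop (N : ℝ)] with q hq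
  have := hCT.sub_le_gpd hY hX hδ hq
  linarith

end StrongCTGraph

namespace Cay

open SimpleGraph

variable {G : Type*} [Group G] {S : Finset G}

def mulLeft (S : Finset G) (g : G) : Cay G S ≃g Cay G S where
  toEquiv := Equiv.mulLeft g
  map_rel_iff' := by simp [Cay, mul_assoc]

@[simp] theorem mulLeft_apply (g a : G) : mulLeft S g a = g * a := rfl

theorem gpd_inv_mul (p a b : G) :
    gpd (Cay G S) 1 (p⁻¹ * a) (p⁻¹ * b) = gpd (Cay G S) p a b := by
  simpa using gpd_map_iso (mulLeft S p⁻¹) p a b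

theorem connected (hS : Subgroup.closure (S : Set G) = ⊤) : (Cay G S).Connected := by
  have hreach : ∀ g ∈ Subgroup.closure (S : Set G), (Cay G S).Reachable 1 g := by
    intro g hg
    induction hg using Subgroup.closure_induction with
    | mem s hs =>
      by_cases h1 : s = 1
      · rw [h1]
      · exact Adj.reachable ⟨Ne.symm h1, Or.inl (by simpa using hs)⟩
    | one => rfl
    | mul x y _ _ hx hy => exact hx.trans (by simpa using hy.map (mulLeft S x).toHom)
    | inv x _ hx => exact Reachable.symm (by simpa using hx.map (mulLeft S x⁻¹).toHom)
  exact ⟨fun x y => (hreach x (hS ▸ Subgroup.mem_top x)).symm.trans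
    (hreach y (hS ▸ Subgroup.mem_top y))⟩

theorem neighborSet_finite (g : G) : ((Cay G S).neighborSet g).Finite := by
  refine ((S.finite_toSet.union S.finite_toSet.inv).image (g * ·)).subset ?_
  rintro h ⟨-, hh | hh⟩
  · exact ⟨g⁻¹ * h, Or.inl hh, by simp⟩
  · exact ⟨g⁻¹ * h, Or.inr (by simpa using hh), by simp⟩

end Cay

namespace CaySub

open SimpleGraph

variable {G : Type*} [Group G] {S T : Finset G} {H : Subgroup G}

theorem eq_cay (H : Subgroup G) (T : Finset G) :
    CaySub H T = Cay H (T.preimage (↑) Subtype.val_injective.injOn) := by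
  ext x y
  simp [CaySub, Cay]

theorem connected (hT : Subgroup.closure (T : Set G) = H) : (CaySub H T).Connected := by
  subst hT
  rw [eq_cay]
  exact Cay.connected (by simp)

theorem neighborSet_finite (h : H) : ((CaySub H T).neighborSet h).Finite := by
  rw [eq_cay]
  exact Cay.neighborSet_finite h

theorem gpd_inv_mul (p a b : H) :
    gpd (CaySub H T) 1 (p⁻¹ * a) (p⁻¹ * b) = gpd (CaySub H T) p a b := by
  rw [eq_cay]
  exact Cay.gpd_inv_mul p a b

def coeHom (hTS : (T : Set G) ⊆ S) : CaySub H T →g Cay G S where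
  toFun := (↑)
  map_rel' := fun ⟨hne, h⟩ => ⟨fun e => hne (Subtype.ext e), h.imp (@hTS _) (@hTS _)⟩

@[simp] theorem coeHom_apply (hTS : (T : Set G) ⊆ S) (h : H) : coeHom hTS h = (h : G) := rfl

theorem dist_coe_le (hTS : (T : Set G) ⊆ S) (hY : (CaySub H T).Connected) (a b : H) :
    (Cay G S).dist (a : G) b ≤ (CaySub H T).dist a b :=
  (coeHom hTS).dist_le (hY.preconnected a b)

end CaySub

section Quasiconvexity

open SimpleGraph

variable {G : Type*} [Group G] {S T : Finset G} {H : Subgroup G} {δ : ℝ}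

theorem quasiconvex_of_forall_gpd_le (hX : (Cay G S).Connected) (hδ : GraphHyp (Cay G S) δ)
    (hY : (CaySub H T).Connected) (hTS : (T : Set G) ⊆ S) {C : ℝ}
    (hC : ∀ u v : H, gpd (CaySub H T) 1 u v = 0 → gpd (Cay G S) 1 (u : G) v ≤ C) :
    ∃ K : ℝ, ∀ a b : G, a ∈ H → b ∈ H →
      ∀ w : (Cay G S).Walk a b, w.length = (Cay G S).dist a b →
        ∀ x ∈ w.support, ∃ h ∈ H, ((Cay G S).dist x h : ℝ) ≤ K := by
  refine ⟨2 * C + 2 * δ, fun a b ha hb w hw x hx => ?_⟩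
  obtain ⟨σ, hσ⟩ := (hY.preconnected ⟨a, ha⟩ ⟨b, hb⟩).exists_walk_length_eq_dist
  obtain ⟨_, hz, hxz⟩ := hδ.exists_mem_walk_dist_le_gpd hX (σ.map (CaySub.coeHom hTS))
    (w.dist_add_dist_of_mem_support hw hx)
  obtain ⟨z, hzσ, rfl⟩ := List.mem_map.1 (Walk.support_map _ _ ▸ hz)
  have hYz : gpd (CaySub H T) 1 (z⁻¹ * ⟨a, ha⟩) (z⁻¹ * ⟨b, hb⟩) = 0 := by
    rw [CaySub.gpd_inv_mul]
    exact gpd_eq_zero_of_dist_add_dist (σ.dist_add_dist_of_mem_support hσ hzσ)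
  have hXz := hC _ _ hYz
  simp only [Subgroup.coe_mul, Subgroup.coe_inv, Cay.gpd_inv_mul] at hXz
  exact ⟨z, z.2, by simp only [CaySub.coeHom_apply] at hxz; linarith⟩

theorem exists_forall_gpd_le_of_injective_strongCT (hX : (Cay G S).Connected)
    (hδ : GraphHyp (Cay G S) δ) (hY : (CaySub H T).Connected) (hTS : (T : Set G) ⊆ S)
    {M : ℕ → ℝ} (hCT : StrongCTGraph (CaySub H T) (Cay G S) (fun h : H => (h : G)) 1 M)
    (hinj : ∀ u v : ℕ → H, GSeqG (CaySub H T) 1 u → GSeqG (CaySub H T) 1 v →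
      GEquivG (Cay G S) 1 (fun n => (u n : G)) (fun n => (v n : G)) →
        GEquivG (CaySub H T) 1 u v) :
    ∃ C : ℝ, ∀ u v : H, gpd (CaySub H T) 1 u v = 0 → gpd (Cay G S) 1 (u : G) v ≤ C := by
  by_contra! h
  choose u v hYuv hXuv using fun n : ℕ => h n
  have hXuv' : Tendsto (fun n => gpd (Cay G S) 1 (u n : G) (v n)) atTop atTop :=
    tendsto_atTop_mono (fun n => (hXuv n).le) tendsto_natCast_atTop_atTop
  have hle : ∀ n, gpd (Cay G S) 1 (u n : G) (v n) ≤ (CaySub H T).dist 1 (u n) ∧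
      gpd (Cay G S) 1 (u n : G) (v n) ≤ (CaySub H T).dist 1 (v n) := fun n =>
    ⟨(gpd_le_dist_left hX).trans (by exact_mod_cast CaySub.dist_coe_le hTS hY 1 (u n)),
      (gpd_le_dist_right hX).trans
        (by exact_mod_cast CaySub.dist_coe_le hTS hY 1 (v n))⟩
  have hu := tendsto_natCast_atTop_iff.1 (tendsto_atTop_mono (fun n => (hle n).1) hXuv')
  have hv := tendsto_natCast_atTop_iff.1 (tendsto_atTop_mono (fun n => (hle n).2) hXuv')
  have hball := hY.finite_setOf_dist_le CaySub.neighborSet_finite 1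
  obtain ⟨φ, hφ, hU⟩ := exists_strictMono_gSeqG hY hball hu
  obtain ⟨ψ, hψ, hV⟩ := exists_strictMono_gSeqG hY hball (hv.comp hφ.tendsto_atTop)
  have hU' := hU.comp_strictMono hψ
  have hEquivX :
      GEquivG (Cay G S) 1 (fun n => (u (φ (ψ n)) : G)) (fun n => (v (φ (ψ n)) : G)) :=
    hδ.gEquivG (hCT.gSeqG_comp hY hX hδ hU') (hXuv'.comp (hφ.comp hψ).tendsto_atTop)
  have hdiag := (hinj _ _ hU' hV hEquivX).tendsto_diag
  simp only [hYuv] at hdiag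
  exact not_tendsto_const_atTop 0 _ hdiag

end Quasiconvexity

theorem quasiconvex_of_injective_strongCT_general {G : Type*} [Group G]
    (S : Finset G) (hSgen : Subgroup.closure (S : Set G) = ⊤)
    (δ : ℝ) (hG : GraphHyp (Cay G S) δ)
    (H : Subgroup G) (T : Finset G) (hTS : (T : Set G) ⊆ (S : Set G))
    (hTgen : Subgroup.closure (T : Set G) = H)
    (M : ℕ → ℝ)
    (hCT : StrongCTGraph (CaySub H T) (Cay G S) (fun h : H => (h : G)) 1 M)
    (hinj : ∀ u v : ℕ → H, GSeqG (CaySub H T) 1 u → GSeqG (CaySub H T) 1 v →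
      GEquivG (Cay G S) 1 (fun n => (u n : G)) (fun n => (v n : G)) →
        GEquivG (CaySub H T) 1 u v) :
    ∃ K : ℝ, ∀ a b : G, a ∈ H → b ∈ H →
      ∀ w : (Cay G S).Walk a b, w.length = (Cay G S).dist a b →
        ∀ x ∈ w.support, ∃ h ∈ H, ((Cay G S).dist x h : ℝ) ≤ K := by
  have hX := Cay.connected hSgen
  have hY := CaySub.connected hTgen
  obtain ⟨C, hC⟩ := exists_forall_gpd_le_of_injective_strongCT hX hG hY hTS hCT hinj
  exact quasiconvex_of_forall_gpd_le hX hG hY hTS hC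

/-- a hyperbolic subgroup of a hyperbolic group whose Cayley graph
inclusion admits an injective Cannon–Thurston map in the strong sense is
quasiconvex. -/
theorem quasiconvex_of_injective_strongCT {G : Type*} [Group G]
    (S : Finset G) (hSgen : Subgroup.closure (S : Set G) = ⊤)
    (δ : ℝ) (hG : GraphHyp (Cay G S) δ)
    (H : Subgroup G) (T : Finset G) (hTS : (T : Set G) ⊆ (S : Set G))
    (hTgen : Subgroup.closure (T : Set G) = H)
    (δ' : ℝ) (hH : GraphHyp (CaySub H T) δ')
    (M : ℕ → ℝ)
    (hCT : StrongCTGraph (CaySub H T) (Cay G S) (fun h : H => (h : G)) 1 M)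
    (hinj : ∀ u v : ℕ → H, GSeqG (CaySub H T) 1 u → GSeqG (CaySub H T) 1 v →
      GEquivG (Cay G S) 1 (fun n => (u n : G)) (fun n => (v n : G)) →
        GEquivG (CaySub H T) 1 u v) :
    ∃ K : ℝ, ∀ a b : G, a ∈ H → b ∈ H →
      ∀ w : (Cay G S).Walk a b, w.length = (Cay G S).dist a b →
        ∀ x ∈ w.support, ∃ h ∈ H, ((Cay G S).dist x h : ℝ) ≤ K :=
  quasiconvex_of_injective_strongCT_general S hSgen δ hG H T hTS hTgen M hCT hinj
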